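/- arXiv:0906.3037 — 7 statements merged into one kernel-verified Lean document; each statement's English description precedes it below -/
import Mathlib

section
/- Let ν > 0, γ > 0, d a positive integer, and define α_k = (Γ(k + d/2) / (k! Γ(d/2) Γ(ν))) γ^{2k} ∫_0^∞ e^{-a} a^{ν + d/2 - 1} (a + γ²)^{-k - d/2} da for k ≥ 0. Then each α_k ≥ 0 and ∑_{k=0}^∞ α_k = 1. -/
open Real MeasureTheory Set Filter Nat

/-!
Put `r = d / 2` and `x = γ² / (a + γ²) ∈ [0, 1)`. The integrand of `α k` is the Gamma(ν)
density `e^(-a) a^(ν - 1) / Γ(ν)` times the negative binomial weight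
`Γ(k + r) / (k! Γ(r)) xᵏ (1 - x)ʳ`. These weights sum to `1` by the binomial series
`∑ Γ(k + r) / k! xᵏ = Γ(r) (1 - x)⁻ʳ`, which follows by writing `Γ(k + r)` as an Euler integral
and summing the exponential series under the integral. All terms are nonnegative, which
justifies both interchanges of sum and integral.
-/

theorem MeasureTheory.hasSum_integral_of_nonneg {α ι : Type*} [MeasurableSpace α]
    {μ : Measure α} [Countable ι] {F : ι → α → ℝ} {f : α → ℝ}
    (hF_meas : ∀ i, AEStronglyMeasurable (F i) μ) (hF_nonneg : ∀ i, 0 ≤ᵐ[μ] F i)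
    (h_lim : ∀ᵐ a ∂μ, HasSum (fun i => F i a) (f a)) (hf : Integrable f μ) :
    HasSum (fun i => ∫ a, F i a ∂μ) (∫ a, f a ∂μ) :=
  hasSum_integral_of_dominated_convergence F hF_meas
    (fun i => (hF_nonneg i).mono fun _ h => (Real.norm_of_nonneg h).le)
    (h_lim.mono fun _ h => h.summable) (hf.congr (h_lim.mono fun _ h => h.tsum_eq.symm)) h_lim

theorem Real.hasSum_Gamma_add_div_factorial_mul_pow {r x : ℝ} (hr : 0 < r) (hx0 : 0 ≤ x)
    (hx1 : x < 1) :
    HasSum (fun k : ℕ => Gamma (k + r) / k ! * x ^ k) (Gamma r * (1 - x) ^ (-r)) := by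
  have hx : 0 < 1 - x := by linarith
  have hterm (k : ℕ) : Gamma (k + r) / k ! * x ^ k =
      ∫ t in Ioi 0, x ^ k / k ! * (exp (-t) * t ^ ((k : ℝ) + r - 1)) := by
    rw [integral_const_mul, ← Gamma_eq_integral (by positivity)]
    ring
  have hlim (t : ℝ) (ht : t ∈ Ioi 0) :
      HasSum (fun k : ℕ => x ^ k / k ! * (exp (-t) * t ^ ((k : ℝ) + r - 1)))
        (t ^ (r - 1) * exp (-((1 - x) * t))) := by
    have hfun : (fun k : ℕ => x ^ k / k ! * (exp (-t) * t ^ ((k : ℝ) + r - 1))) =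
        fun k : ℕ => (x * t) ^ k / k ! * (exp (-t) * t ^ (r - 1)) := by
      ext k
      rw [add_sub_assoc, rpow_add ht, rpow_natCast, mul_pow]
      ring
    have hexp : exp (x * t) * (exp (-t) * t ^ (r - 1)) = t ^ (r - 1) * exp (-((1 - x) * t)) := by
      rw [← mul_assoc, ← exp_add]
      ring_nf
    rw [hfun, ← hexp, Real.exp_eq_exp_ℝ]
    exact (NormedSpace.expSeries_div_hasSum_exp (x * t)).mul_right _
  have hval : ∫ t in Ioi 0, t ^ (r - 1) * exp (-((1 - x) * t)) = Gamma r * (1 - x) ^ (-r) := by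
    rw [integral_rpow_mul_exp_neg_mul_Ioi hr hx, one_div, inv_rpow hx.le, ← rpow_neg hx.le,
      mul_comm]
  have hint : IntegrableOn (fun t => t ^ (r - 1) * exp (-((1 - x) * t))) (Ioi 0) := by
    refine (integrableOn_rpow_mul_exp_neg_mul_rpow (s := r - 1) (by linarith) one_pos
      hx).congr_fun (fun t _ => ?_) measurableSet_Ioi
    simp only [rpow_one, neg_mul]
  simp_rw [hterm, ← hval]
  refine hasSum_integral_of_nonneg (fun k => by fun_prop) (fun k => ?_)
    (ae_restrict_of_forall_mem measurableSet_Ioi hlim) hint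
  filter_upwards [ae_restrict_mem measurableSet_Ioi] with t ht
  have : 0 < t := ht
  positivity

noncomputable def alphaIntegrand (ν γ r : ℝ) (k : ℕ) (a : ℝ) : ℝ :=
  Gamma (k + r) / (k ! * Gamma r * Gamma ν) * γ ^ (2 * k) *
    (exp (-a) * a ^ (ν + r - 1) * (a + γ ^ 2) ^ (-(k : ℝ) - r))

lemma measurable_alphaIntegrand (ν γ r : ℝ) (k : ℕ) : Measurable (alphaIntegrand ν γ r k) := by
  unfold alphaIntegrand
  fun_prop

lemma alphaIntegrand_nonneg {ν γ r a : ℝ} (hν : 0 < ν) (hr : 0 < r) (ha : 0 < a) (k : ℕ) :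
    0 ≤ alphaIntegrand ν γ r k a := by
  have : 0 < Gamma (k + r) := Gamma_pos_of_pos (by positivity)
  have := Gamma_pos_of_pos hr
  have := Gamma_pos_of_pos hν
  unfold alphaIntegrand
  rw [pow_mul]
  positivity

lemma hasSum_alphaIntegrand (ν γ : ℝ) {r a : ℝ} (hr : 0 < r) (ha : 0 < a) :
    HasSum (fun k => alphaIntegrand ν γ r k a) (exp (-a) * a ^ (ν - 1) / Gamma ν) := by
  have hA : 0 < a + γ ^ 2 := by positivity
  set x := γ ^ 2 / (a + γ ^ 2) with hx
  have hx0 : 0 ≤ x := by positivity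
  have hx1 : x < 1 := by rw [hx, div_lt_one hA]; linarith
  set D := exp (-a) * a ^ (ν + r - 1) * (a + γ ^ 2) ^ (-r) / (Gamma r * Gamma ν) with hD
  have hterm (k : ℕ) : alphaIntegrand ν γ r k a = Gamma (k + r) / k ! * x ^ k * D := by
    rw [alphaIntegrand, hD, sub_eq_add_neg (-(k : ℝ)), rpow_add hA, rpow_neg hA.le (k : ℝ),
      rpow_natCast, hx, div_pow, pow_mul]
    field_simp
  have hvalue : Gamma r * (1 - x) ^ (-r) * D = exp (-a) * a ^ (ν - 1) / Gamma ν := by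
    have h1x : 1 - x = a / (a + γ ^ 2) := by rw [hx]; field_simp; ring
    have : a ^ r ≠ 0 := by positivity
    have : (a + γ ^ 2) ^ r ≠ 0 := by positivity
    rw [h1x, rpow_neg (by positivity), div_rpow ha.le hA.le, inv_div, hD, add_sub_right_comm,
      rpow_add ha, rpow_neg hA.le]
    field_simp
  simp_rw [hterm, ← hvalue]
  exact (hasSum_Gamma_add_div_factorial_mul_pow hr hx0 hx1).mul_right D

theorem alpha_nonneg_sum_one_general (ν γ : ℝ) (hν : 0 < ν) (d : ℕ) (hd : 1 ≤ d)
    (α : ℕ → ℝ)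
    (hα : ∀ k : ℕ, α k =
      Real.Gamma ((k : ℝ) + (d : ℝ) / 2) /
          ((Nat.factorial k : ℝ) * Real.Gamma ((d : ℝ) / 2) * Real.Gamma ν) *
        γ ^ (2 * k) *
        ∫ a in Set.Ioi (0 : ℝ),
          Real.exp (-a) * a ^ (ν + (d : ℝ) / 2 - 1) * (a + γ ^ 2) ^ (-(k : ℝ) - (d : ℝ) / 2)) :
    (∀ k, 0 ≤ α k) ∧ HasSum α 1 := by
  have hr : 0 < (d : ℝ) / 2 := by have : (1 : ℝ) ≤ d := mod_cast hd; positivity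
  have hα_eq (k : ℕ) : α k = ∫ a in Ioi 0, alphaIntegrand ν γ (d / 2) k a := by
    rw [hα k, ← integral_const_mul]
    rfl
  have h_nonneg (k : ℕ) : ∀ᵐ a ∂volume.restrict (Ioi 0), 0 ≤ alphaIntegrand ν γ (d / 2) k a :=
    ae_restrict_of_forall_mem measurableSet_Ioi fun _ ha => alphaIntegrand_nonneg hν hr ha k
  refine ⟨fun k => hα_eq k ▸ integral_nonneg_of_ae (h_nonneg k), ?_⟩
  have h := hasSum_integral_of_nonneg
    (fun k => (measurable_alphaIntegrand ν γ _ k).aestronglyMeasurable) h_nonneg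
    (ae_restrict_of_forall_mem measurableSet_Ioi fun _ ha => hasSum_alphaIntegrand ν γ hr ha)
    ((GammaIntegral_convergent hν).div_const _)
  rwa [integral_div, ← Gamma_eq_integral hν, div_self (Gamma_pos_of_pos hν).ne', ← funext hα_eq]
    at h

theorem alpha_nonneg_sum_one (ν γ : ℝ) (hν : 0 < ν) (hγ : 0 < γ) (d : ℕ) (hd : 1 ≤ d)
    (α : ℕ → ℝ)
    (hα : ∀ k : ℕ, α k =
      Real.Gamma ((k : ℝ) + (d : ℝ) / 2) /
          ((Nat.factorial k : ℝ) * Real.Gamma ((d : ℝ) / 2) * Real.Gamma ν) *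
        γ ^ (2 * k) *
        ∫ a in Set.Ioi (0 : ℝ),
          Real.exp (-a) * a ^ (ν + (d : ℝ) / 2 - 1) * (a + γ ^ 2) ^ (-(k : ℝ) - (d : ℝ) / 2)) :
    (∀ k, 0 ≤ α k) ∧ HasSum α 1 :=
  alpha_nonneg_sum_one_general ν γ hν d hd α hα
end

section
/- Let ν > 1, γ > 0, d a positive integer, and let α_k be as in the mixing distribution: α_k = (Γ(k + d/2)/(k! Γ(d/2) Γ(ν))) γ^{2k} ∫_0^∞ e^{-a} a^{ν+d/2-1} (a+γ²)^{-k-d/2} da. Then ∑_{k=0}^∞ k·α_k = d γ² / (2(ν-1)). -/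
/-!
Given `a`, the weights `α k` are a negative binomial law `NB(d/2, x)` with `x = γ² / (a + γ²)`
mixed over `a ∼ Γ(ν, 1)`. The conditional mean is `(d/2) x / (1 - x) = d γ² / (2a)`, and
`E[1/a] = Γ(ν - 1) / Γ(ν) = 1 / (ν - 1)`. The negative binomial series
`∑ Γ(k + r) / k! xᵏ = Γ(r) (1 - x)⁻ʳ` is obtained by writing `Γ(k + r)` as an integral and summing
the exponential series under it. Both exchanges of sum and integral are justified by dominated
convergence, the terms being nonnegative.
-/

open Real MeasureTheory Set

section

variable {α : Type*} [MeasurableSpace α] {μ : Measure α}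

theorem hasSum_integral_of_nonneg_of_hasSum {f : ℕ → α → ℝ} {g : α → ℝ}
    (hf_meas : ∀ n, AEStronglyMeasurable (f n) μ) (hf_nonneg : ∀ n, 0 ≤ᵐ[μ] f n)
    (hfg : ∀ᵐ a ∂μ, HasSum (fun n => f n a) (g a)) (hg : Integrable g μ) :
    HasSum (fun n => ∫ a, f n a ∂μ) (∫ a, g a ∂μ) := by
  refine hasSum_integral_of_dominated_convergence f hf_meas (fun n => ?_)
    (hfg.mono fun a ha => ha.summable) ?_ hfg
  · filter_upwards [hf_nonneg n] with a ha
    rw [Real.norm_of_nonneg ha]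
  · exact hg.congr (hfg.mono fun a ha => ha.tsum_eq.symm)

end

theorem hasSum_gamma_add_div_factorial_mul_pow {r x : ℝ} (hr : 0 < r) (hx0 : 0 ≤ x)
    (hx1 : x < 1) :
    HasSum (fun k : ℕ => Gamma (k + r) / k.factorial * x ^ k) (Gamma r * (1 - x) ^ (-r)) := by
  have hterm (k : ℕ) : Gamma (k + r) / k.factorial * x ^ k
      = ∫ t in Ioi (0 : ℝ), exp (-t) * t ^ (k + r - 1) * (x ^ k / k.factorial) := by
    rw [integral_mul_const, ← Gamma_eq_integral (by positivity)]
    ring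
  have hpointwise : ∀ t ∈ Ioi (0 : ℝ), HasSum
      (fun k : ℕ => exp (-t) * t ^ (k + r - 1) * (x ^ k / k.factorial))
      (t ^ (r - 1) * exp (-((1 - x) * t))) := by
    intro t (ht : 0 < t)
    have hseries :=
      (NormedSpace.expSeries_div_hasSum_exp (x * t)).mul_left (exp (-t) * t ^ (r - 1))
    have hfactor (k : ℕ) : exp (-t) * t ^ (k + r - 1) * (x ^ k / k.factorial)
        = exp (-t) * t ^ (r - 1) * ((x * t) ^ k / k.factorial) := by
      rw [add_sub_assoc, rpow_add ht, rpow_natCast, mul_pow]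
      ring
    have hsum : t ^ (r - 1) * exp (-((1 - x) * t))
        = exp (-t) * t ^ (r - 1) * NormedSpace.exp (x * t) := by
      rw [← Real.exp_eq_exp_ℝ, show -((1 - x) * t) = -t + x * t by ring, exp_add]
      ring
    rw [funext hfactor, hsum]
    exact hseries
  have hg : IntegrableOn (fun t => t ^ (r - 1) * exp (-((1 - x) * t))) (Ioi 0) := by
    simpa only [rpow_one, neg_mul] using
      integrableOn_rpow_mul_exp_neg_mul_rpow (p := 1) (by linarith : -1 < r - 1) one_pos
        (by linarith : 0 < 1 - x)
  have hintegral := hasSum_integral_of_nonneg_of_hasSum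
    (μ := volume.restrict (Ioi 0)) (fun k => (by fun_prop : Measurable _).aestronglyMeasurable)
    (fun k => (ae_restrict_iff' measurableSet_Ioi).2 (.of_forall fun t ht => by
      have : 0 < t := ht
      positivity))
    ((ae_restrict_iff' measurableSet_Ioi).2 (.of_forall hpointwise)) hg
  rw [integral_rpow_mul_exp_neg_mul_Ioi hr (by linarith), one_div, inv_rpow (by linarith),
    ← rpow_neg (by linarith), mul_comm] at hintegral
  simpa only [hterm] using hintegral

theorem hasSum_nat_mul_gamma_add_div_factorial_mul_pow {r x : ℝ} (hr : 0 < r) (hx0 : 0 ≤ x)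
    (hx1 : x < 1) :
    HasSum (fun k : ℕ => k * (Gamma (k + r) / k.factorial * x ^ k))
      (Gamma (r + 1) * (1 - x) ^ (-(r + 1)) * x) := by
  rw [← hasSum_nat_add_iff' 1]
  simp only [Finset.range_one, Finset.sum_singleton, CharP.cast_eq_zero, zero_mul, sub_zero]
  have hshift (k : ℕ) :
      ((k + 1 : ℕ) : ℝ) * (Gamma ((k + 1 : ℕ) + r) / (k + 1).factorial * x ^ (k + 1))
      = Gamma (k + (r + 1)) / k.factorial * x ^ k * x := by
    rw [Nat.factorial_succ, pow_succ]
    push_cast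
    rw [add_right_comm, ← add_assoc]
    field_simp
  simpa only [hshift] using
    (hasSum_gamma_add_div_factorial_mul_pow (by linarith : 0 < r + 1) hx0 hx1).mul_right x

theorem hasSum_nat_mul_negBinomial_mixture_integrand {ν γ r a : ℝ} (hr : 0 < r) (ha : 0 < a) :
    HasSum (fun k : ℕ => k * (Gamma (k + r) / (k.factorial * Gamma r * Gamma ν) * γ ^ (2 * k)) *
        (exp (-a) * a ^ (ν + r - 1) * (a + γ ^ 2) ^ (-(k : ℝ) - r)))
      (r * γ ^ 2 / Gamma ν * (exp (-a) * a ^ (ν - 2))) := by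
  have hb : 0 < a + γ ^ 2 := by positivity
  have hx1 : γ ^ 2 / (a + γ ^ 2) < 1 := (div_lt_one hb).2 (by linarith)
  have hterm (k : ℕ) : k * (Gamma (k + r) / (k.factorial * Gamma r * Gamma ν) * γ ^ (2 * k)) *
      (exp (-a) * a ^ (ν + r - 1) * (a + γ ^ 2) ^ (-(k : ℝ) - r))
      = exp (-a) * a ^ (ν + r - 1) * (a + γ ^ 2) ^ (-r) / (Gamma r * Gamma ν) *
        (k * (Gamma (k + r) / k.factorial * (γ ^ 2 / (a + γ ^ 2)) ^ k)) := by
    rw [show -(k : ℝ) - r = -k + -r by ring, rpow_add hb, rpow_neg hb.le (k : ℝ), rpow_natCast,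
      pow_mul, div_pow]
    field_simp
  have hsum : r * γ ^ 2 / Gamma ν * (exp (-a) * a ^ (ν - 2))
      = exp (-a) * a ^ (ν + r - 1) * (a + γ ^ 2) ^ (-r) / (Gamma r * Gamma ν) *
        (Gamma (r + 1) * (1 - γ ^ 2 / (a + γ ^ 2)) ^ (-(r + 1)) * (γ ^ 2 / (a + γ ^ 2))) := by
    rw [Gamma_add_one hr.ne', one_sub_div hb.ne', add_sub_cancel_right,
      div_rpow ha.le hb.le, rpow_neg ha.le, rpow_neg hb.le, rpow_neg hb.le,
      show ν + r - 1 = (ν - 2) + (r + 1) by ring, rpow_add ha, rpow_add hb, rpow_add ha,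
      rpow_one, rpow_one]
    field_simp
  rw [funext hterm, hsum]
  exact (hasSum_nat_mul_gamma_add_div_factorial_mul_pow hr (by positivity) hx1).mul_left _

theorem alpha_mean_general (ν γ : ℝ) (hν : 1 < ν) (d : ℕ) (hd : 1 ≤ d)
    (α : ℕ → ℝ)
    (hα : ∀ k : ℕ, α k =
      Real.Gamma ((k : ℝ) + (d : ℝ) / 2) /
          ((Nat.factorial k : ℝ) * Real.Gamma ((d : ℝ) / 2) * Real.Gamma ν) *
        γ ^ (2 * k) *
        ∫ a in Set.Ioi (0 : ℝ),
          Real.exp (-a) * a ^ (ν + (d : ℝ) / 2 - 1) * (a + γ ^ 2) ^ (-(k : ℝ) - (d : ℝ) / 2)) :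
    ∑' k : ℕ, (k : ℝ) * α k = (d : ℝ) * γ ^ 2 / (2 * (ν - 1)) := by
  have hr : (0 : ℝ) < d / 2 := by
    have : (1 : ℝ) ≤ d := by exact_mod_cast hd
    positivity
  have hν1 : 0 < ν - 1 := by linarith
  have hterms := hasSum_integral_of_nonneg_of_hasSum (μ := (volume : Measure ℝ).restrict (Ioi 0))
    (fun k => (by fun_prop : Measurable _).aestronglyMeasurable)
    (fun k => (ae_restrict_iff' measurableSet_Ioi).2 (.of_forall fun a ha => by
      have : 0 < a := ha
      have : 0 < ν := by linarith
      rw [pow_mul]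
      positivity))
    ((ae_restrict_iff' measurableSet_Ioi).2
      (.of_forall fun a ha =>
        hasSum_nat_mul_negBinomial_mixture_integrand (ν := ν) (γ := γ) hr ha))
    (by simpa only [sub_sub, one_add_one_eq_two] using (GammaIntegral_convergent hν1).const_mul _)
  have hmean : ∫ a in Ioi 0, (d : ℝ) / 2 * γ ^ 2 / Gamma ν * (exp (-a) * a ^ (ν - 2))
      = d * γ ^ 2 / (2 * (ν - 1)) := by
    have hΓν : Gamma ν = (ν - 1) * Gamma (ν - 1) := by
      simpa only [sub_add_cancel] using Gamma_add_one hν1.ne'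
    have := Gamma_pos_of_pos hν1
    rw [integral_const_mul, ← one_add_one_eq_two, ← sub_sub, ← Gamma_eq_integral hν1, hΓν]
    field_simp
  rw [← hmean, ← hterms.tsum_eq]
  congr with k
  rw [hα k, integral_const_mul]
  ring

theorem alpha_mean (ν γ : ℝ) (hν : 1 < ν) (hγ : 0 < γ) (d : ℕ) (hd : 1 ≤ d)
    (α : ℕ → ℝ)
    (hα : ∀ k : ℕ, α k =
      Real.Gamma ((k : ℝ) + (d : ℝ) / 2) /
          ((Nat.factorial k : ℝ) * Real.Gamma ((d : ℝ) / 2) * Real.Gamma ν) *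
        γ ^ (2 * k) *
        ∫ a in Set.Ioi (0 : ℝ),
          Real.exp (-a) * a ^ (ν + (d : ℝ) / 2 - 1) * (a + γ ^ 2) ^ (-(k : ℝ) - (d : ℝ) / 2)) :
    ∑' k : ℕ, (k : ℝ) * α k = (d : ℝ) * γ ^ 2 / (2 * (ν - 1)) :=
  alpha_mean_general ν γ hν d hd α hα
end

section
/- Let μ, ν > 0, d ≥ 1, n ≥ 0, and define d_{k,l} = (B(ν+d/2, μ+d/2)/(B(ν,μ) k! l!)) · (μ+d/2)_{2k} (ν+d/2)_l (d/2)_{k+l} / (μ+ν+d)_{2k+l}. Then ∑_{k=0}^n d_{k,n-k} = (1/B(ν,μ)) ((d/2)_n/n!) ∫_0^1 t^{μ+n+d/2-1}(1-t)^{ν+n+d/2-1} (1 + t/(1-t) + (1-t)/t)^n dt. -/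
open Real MeasureTheory

/-! Multiplying by `(t (1 - t))ⁿ` turns the trinomial `1 + t/(1-t) + (1-t)/t` into `t² + (1 - t)`,
so the binomial theorem splits the integral into the Beta integrals
`B(μ + d/2 + 2k, ν + d/2 + n - k)` weighted by `C(n, k)`. Since `Γ(x + m) = Γ(x) (x)ₘ`, each of
them is `B(μ + d/2, ν + d/2)` times a quotient of Pochhammer symbols, and with
`C(n, k) = n! / (k! (n - k)!)` this is the `k`-th term `d_{k, n-k}`. -/

open Finset ProbabilityTheory

theorem Real.Gamma_add_nat_eq_mul_ascPochhammer {x : ℝ} (hx : 0 < x) (m : ℕ) :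
    Gamma (x + m) = Gamma x * (ascPochhammer ℝ m).eval x := by
  induction m with
  | zero => simp
  | succ m ih =>
    rw [Nat.cast_succ, ← add_assoc, Gamma_add_one (by positivity), ih, ascPochhammer_succ_right,
      Polynomial.eval_mul]
    simp only [Polynomial.eval_add, Polynomial.eval_X, Polynomial.eval_natCast]
    ring

theorem beta_add_nat_add_nat {a b : ℝ} (ha : 0 < a) (hb : 0 < b) (p q : ℕ) :
    beta (a + p) (b + q) =
      beta a b * ((ascPochhammer ℝ p).eval a * (ascPochhammer ℝ q).eval b /
        (ascPochhammer ℝ (p + q)).eval (a + b)) := by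
  have hpq : a + p + (b + q) = a + b + ((p + q : ℕ) : ℝ) := by push_cast; ring
  have hab : 0 < a + b := add_pos ha hb
  simp only [beta, hpq, Gamma_add_nat_eq_mul_ascPochhammer ha,
    Gamma_add_nat_eq_mul_ascPochhammer hb, Gamma_add_nat_eq_mul_ascPochhammer hab]
  field_simp

theorem Complex.betaIntegral_ofReal (u v : ℝ) :
    Complex.betaIntegral u v = ↑(∫ x in (0 : ℝ)..1, x ^ (u - 1) * (1 - x) ^ (v - 1)) := by
  rw [Complex.betaIntegral, ← intervalIntegral.integral_ofReal]
  refine intervalIntegral.integral_congr fun x hx => ?_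
  rw [Set.uIcc_of_le zero_le_one] at hx
  simp only [Complex.ofReal_mul, Complex.ofReal_cpow hx.1, Complex.ofReal_cpow (sub_nonneg.2 hx.2)]
  push_cast
  ring

theorem integral_rpow_mul_one_sub_rpow {u v : ℝ} (hu : 0 < u) (hv : 0 < v) :
    ∫ x in (0 : ℝ)..1, x ^ (u - 1) * (1 - x) ^ (v - 1) = beta u v := by
  rw [beta_eq_betaIntegralReal u v hu hv, Complex.betaIntegral_ofReal, Complex.ofReal_re]

theorem intervalIntegrable_rpow_mul_one_sub_rpow {u v : ℝ} (hu : 0 < u) (hv : 0 < v) :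
    IntervalIntegrable (fun x : ℝ => x ^ (u - 1) * (1 - x) ^ (v - 1)) volume 0 1 :=
  intervalIntegral.intervalIntegrable_of_integral_ne_zero <| by
    rw [integral_rpow_mul_one_sub_rpow hu hv]; exact (beta_pos hu hv).ne'

theorem rpow_mul_one_sub_rpow_mul_trinomial_pow {t : ℝ} (ht₀ : 0 < t) (ht₁ : t < 1)
    (a b : ℝ) (n : ℕ) :
    t ^ (a + n - 1) * (1 - t) ^ (b + n - 1) * (1 + t / (1 - t) + (1 - t) / t) ^ n =
      ∑ k ∈ range (n + 1),
        n.choose k * (t ^ (a + (2 * k : ℕ) - 1) * (1 - t) ^ (b + (n - k : ℕ) - 1)) := by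
  have hs₀ : 0 < 1 - t := sub_pos.2 ht₁
  have hsplit : ∀ {x : ℝ}, 0 < x → ∀ (c : ℝ) (m : ℕ), x ^ (c + m - 1) = x ^ (c - 1) * x ^ m :=
    fun hx c m => by rw [add_sub_right_comm, rpow_add_natCast hx.ne']
  have htrinomial : (1 + t / (1 - t) + (1 - t) / t) * (t * (1 - t)) = t ^ 2 + (1 - t) := by
    field_simp; ring
  calc t ^ (a + n - 1) * (1 - t) ^ (b + n - 1) * (1 + t / (1 - t) + (1 - t) / t) ^ n
      = t ^ (a - 1) * (1 - t) ^ (b - 1) * (t ^ 2 + (1 - t)) ^ n := by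
        rw [hsplit ht₀, hsplit hs₀, ← htrinomial, mul_pow, mul_pow]; ring
    _ = _ := by
        rw [add_pow, mul_sum]
        refine sum_congr rfl fun k _ => ?_
        rw [hsplit ht₀, hsplit hs₀, ← pow_mul]; ring

theorem integral_rpow_mul_one_sub_rpow_mul_trinomial_pow {a b : ℝ} (ha : 0 < a) (hb : 0 < b)
    (n : ℕ) :
    ∫ t in (0 : ℝ)..1,
        t ^ (a + n - 1) * (1 - t) ^ (b + n - 1) * (1 + t / (1 - t) + (1 - t) / t) ^ n =
      ∑ k ∈ range (n + 1), n.choose k * beta (a + (2 * k : ℕ)) (b + (n - k : ℕ)) := by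
  have hpos : ∀ (c : ℝ) (m : ℕ), 0 < c → 0 < c + m := fun c m hc => by positivity
  calc _ = ∫ t in (0 : ℝ)..1, ∑ k ∈ range (n + 1),
          n.choose k * (t ^ (a + (2 * k : ℕ) - 1) * (1 - t) ^ (b + (n - k : ℕ) - 1)) := by
        simp only [intervalIntegral.integral_of_le zero_le_one, integral_Ioc_eq_integral_Ioo]
        exact setIntegral_congr_fun measurableSet_Ioo fun t ht =>
          rpow_mul_one_sub_rpow_mul_trinomial_pow ht.1 ht.2 a b n
    _ = _ := by
        rw [intervalIntegral.integral_finsetSum fun k _ =>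
          (intervalIntegrable_rpow_mul_one_sub_rpow (hpos a _ ha) (hpos b _ hb)).const_mul _]
        refine sum_congr rfl fun k _ => ?_
        rw [intervalIntegral.integral_const_mul,
          integral_rpow_mul_one_sub_rpow (hpos a _ ha) (hpos b _ hb)]

theorem sum_dkl_eq_cn_general (ν μ : ℝ) (hν : 0 < ν) (hμ : 0 < μ) (d : ℕ) (n : ℕ)
    (D : ℕ → ℕ → ℝ)
    (hD : ∀ k l : ℕ, D k l =
      ((Real.Gamma (ν + (d : ℝ) / 2) * Real.Gamma (μ + (d : ℝ) / 2) /
          Real.Gamma (ν + μ + (d : ℝ))) /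
        ((Real.Gamma ν * Real.Gamma μ / Real.Gamma (ν + μ)) *
          (Nat.factorial k : ℝ) * (Nat.factorial l : ℝ))) *
      ((ascPochhammer ℝ (2 * k)).eval (μ + (d : ℝ) / 2) *
        (ascPochhammer ℝ l).eval (ν + (d : ℝ) / 2) *
        (ascPochhammer ℝ (k + l)).eval ((d : ℝ) / 2) /
        (ascPochhammer ℝ (2 * k + l)).eval (μ + ν + (d : ℝ)))) :
    ∑ k ∈ Finset.range (n + 1), D k (n - k) =
      (Real.Gamma (ν + μ) / (Real.Gamma ν * Real.Gamma μ)) *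
        ((ascPochhammer ℝ n).eval ((d : ℝ) / 2) / (Nat.factorial n : ℝ)) *
        ∫ t in (0 : ℝ)..1,
          t ^ (μ + (n : ℝ) + (d : ℝ) / 2 - 1) * (1 - t) ^ (ν + (n : ℝ) + (d : ℝ) / 2 - 1) *
            (1 + t / (1 - t) + (1 - t) / t) ^ n := by
  have ha : 0 < μ + (d : ℝ) / 2 := by positivity
  have hb : 0 < ν + (d : ℝ) / 2 := by positivity
  rw [add_right_comm μ, add_right_comm ν, integral_rpow_mul_one_sub_rpow_mul_trinomial_pow ha hb,
    mul_sum]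
  refine sum_congr rfl fun k hk => ?_
  have hk : k ≤ n := Nat.lt_succ_iff.mp (mem_range.mp hk)
  have hab : μ + (d : ℝ) / 2 + (ν + d / 2) = μ + ν + d := by ring
  rw [hD, beta_add_nat_add_nat ha hb, Nat.cast_choose ℝ hk, Nat.add_sub_cancel' hk, hab,
    add_comm ν μ]
  simp only [beta, hab]
  field_simp

theorem sum_dkl_eq_cn (ν μ : ℝ) (hν : 0 < ν) (hμ : 0 < μ) (d : ℕ) (hd : 1 ≤ d) (n : ℕ)
    (D : ℕ → ℕ → ℝ)
    (hD : ∀ k l : ℕ, D k l =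
      ((Real.Gamma (ν + (d : ℝ) / 2) * Real.Gamma (μ + (d : ℝ) / 2) /
          Real.Gamma (ν + μ + (d : ℝ))) /
        ((Real.Gamma ν * Real.Gamma μ / Real.Gamma (ν + μ)) *
          (Nat.factorial k : ℝ) * (Nat.factorial l : ℝ))) *
      ((ascPochhammer ℝ (2 * k)).eval (μ + (d : ℝ) / 2) *
        (ascPochhammer ℝ l).eval (ν + (d : ℝ) / 2) *
        (ascPochhammer ℝ (k + l)).eval ((d : ℝ) / 2) /
        (ascPochhammer ℝ (2 * k + l)).eval (μ + ν + (d : ℝ)))) :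
    ∑ k ∈ Finset.range (n + 1), D k (n - k) =
      (Real.Gamma (ν + μ) / (Real.Gamma ν * Real.Gamma μ)) *
        ((ascPochhammer ℝ n).eval ((d : ℝ) / 2) / (Nat.factorial n : ℝ)) *
        ∫ t in (0 : ℝ)..1,
          t ^ (μ + (n : ℝ) + (d : ℝ) / 2 - 1) * (1 - t) ^ (ν + (n : ℝ) + (d : ℝ) / 2 - 1) *
            (1 + t / (1 - t) + (1 - t) / t) ^ n :=
  sum_dkl_eq_cn_general ν μ hν hμ d n D hD
end

section
/- Let ν > 0, σ > 0, γ = 1/(σ√2), and d ≥ 1. Then for all z ∈ ℝ^d, ∫_0^∞ (1/Γ(ν)) e^{-a} a^{ν-1} (2π(σ² + 1/(2a)))^{-d/2} exp(−‖z‖²/(2(σ² + 1/(2a)))) da = ∑_{k=0}^∞ α_k g_{k,σ}(z), where α_k = (Γ(k+d/2)/(k! Γ(d/2) Γ(ν))) γ^{2k} ∫_0^∞ e^{-a} a^{ν+d/2-1} (a+γ²)^{-k-d/2} da and g_{k,σ}(z) = (Γ(d/2)/(Γ(k+d/2)(σ√(2π))^d)) (‖z‖²/(2σ²))^k e^{−‖z‖²/(2σ²)}.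 -/
/-!
With `c = 1 / (2σ²)` one has `σ² + 1/(2a) = σ² (a + c) / a`, so the Gaussian factor of the
mixture integrand splits as

  `exp (-‖z‖² / (2(σ² + 1/(2a)))) = exp (-‖z‖² / (2σ²)) · exp ((‖z‖² / (2σ²)) · c / (a + c))`.

Expanding the second exponential in its power series writes the integrand as a series of
nonnegative functions of `a`, each dominated by a multiple of the Gamma integrand
`exp (-a) a^(ν + d/2 - 1)`; the series of their integrals is then summable, so sum and integral
may be interchanged, and the `k`-th integral is the `k`-th term of the claimed series.
-/

open Real MeasureTheory Set

open scoped Nat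

lemma rpow_neg_natCast_sub {b : ℝ} (hb : 0 < b) (k : ℕ) (r : ℝ) :
    b ^ (-(k : ℝ) - r) = b ^ (-r) / b ^ k := by
  rw [sub_eq_add_neg, rpow_add hb, rpow_neg hb.le (k : ℝ), rpow_natCast, inv_mul_eq_div]

lemma rpow_neg_mul_exp_div_eq_tsum {b : ℝ} (hb : 0 < b) (r y : ℝ) :
    b ^ (-r) * exp (y / b) = ∑' k : ℕ, y ^ k / k ! * b ^ (-(k : ℝ) - r) := by
  rw [exp_eq_exp_ℝ, NormedSpace.exp_eq_tsum_div, ← tsum_mul_left]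
  congr 1 with k
  rw [rpow_neg_natCast_sub hb, div_pow]
  have : (b ^ k) ≠ 0 := by positivity
  field_simp

lemma summable_mul_pow_div_factorial_mul_rpow {c : ℝ} (hc : 0 < c) (C y r G : ℝ) :
    Summable fun k : ℕ ↦ C * ((y * c) ^ k / k !) * (c ^ (-(k : ℝ) - r) * G) := by
  refine ((summable_pow_div_factorial y).mul_left (C * c ^ (-r) * G)).congr fun k ↦ ?_
  have : c ^ k ≠ 0 := by positivity
  rw [rpow_neg_natCast_sub hc, mul_pow]
  field_simp

lemma mul_sqrt_pow_eq_rpow {σ : ℝ} (hσ : 0 ≤ σ) {b : ℝ} (hb : 0 ≤ b) (d : ℕ) :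
    (σ * √b) ^ d = (b * σ ^ 2) ^ ((d : ℝ) / 2) := by
  rw [rpow_div_two_eq_sqrt _ (by positivity), rpow_natCast, sqrt_mul hb, sqrt_sq hσ, mul_comm]

section GammaIntegral

variable {p c e : ℝ}

lemma exp_neg_mul_rpow_mul_add_rpow_le (hc : 0 < c) (he : e ≤ 0) {a : ℝ} (ha : 0 < a) :
    exp (-a) * a ^ (p - 1) * (a + c) ^ e ≤ c ^ e * (exp (-a) * a ^ (p - 1)) := by
  rw [mul_comm]
  exact mul_le_mul_of_nonneg_right (rpow_le_rpow_of_nonpos hc (le_add_of_nonneg_left ha.le) he)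
    (by positivity)

lemma integrableOn_exp_neg_mul_rpow_mul_add_rpow (hp : 0 < p) (hc : 0 < c) (he : e ≤ 0) :
    IntegrableOn (fun a ↦ exp (-a) * a ^ (p - 1) * (a + c) ^ e) (Ioi 0) := by
  refine ((GammaIntegral_convergent hp).const_mul (c ^ e)).mono' (by fun_prop) ?_
  filter_upwards [ae_restrict_mem measurableSet_Ioi] with a (ha : 0 < a)
  rw [norm_of_nonneg (by positivity)]
  exact exp_neg_mul_rpow_mul_add_rpow_le hc he ha

lemma setIntegral_exp_neg_mul_rpow_mul_add_rpow_le (hp : 0 < p) (hc : 0 < c) (he : e ≤ 0) :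
    ∫ a in Ioi 0, exp (-a) * a ^ (p - 1) * (a + c) ^ e ≤ c ^ e * Gamma p := by
  rw [Gamma_eq_integral hp, ← integral_const_mul]
  exact setIntegral_mono_on (integrableOn_exp_neg_mul_rpow_mul_add_rpow hp hc he)
    ((GammaIntegral_convergent hp).const_mul _) measurableSet_Ioi
    fun a ha ↦ exp_neg_mul_rpow_mul_add_rpow_le hc he ha

end GammaIntegral

lemma integral_tsum_mul_of_nonneg {α : Type*} [MeasurableSpace α] {μ : Measure α}
    {w B : ℕ → ℝ} {f : ℕ → α → ℝ} (hw : ∀ k, 0 ≤ w k) (hf : ∀ k, 0 ≤ᵐ[μ] f k)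
    (hint : ∀ k, Integrable (f k) μ) (hB : ∀ k, ∫ a, f k a ∂μ ≤ B k)
    (hsum : Summable fun k ↦ w k * B k) :
    ∫ a, ∑' k, w k * f k a ∂μ = ∑' k, w k * ∫ a, f k a ∂μ := by
  have hnorm : ∀ k, ∫ a, ‖w k * f k a‖ ∂μ = w k * ∫ a, f k a ∂μ := fun k ↦ by
    rw [← integral_const_mul]
    refine integral_congr_ae ?_
    filter_upwards [hf k] with a ha
    exact norm_of_nonneg (mul_nonneg (hw k) ha)
  have hsum_norm : Summable fun k ↦ ∫ a, ‖w k * f k a‖ ∂μ := by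
    simp only [hnorm]
    exact hsum.of_nonneg_of_le (fun k ↦ mul_nonneg (hw k) (integral_nonneg_of_ae (hf k)))
      fun k ↦ mul_le_mul_of_nonneg_left (hB k) (hw k)
  rw [← integral_tsum_of_summable_integral_norm (fun k ↦ (hint k).const_mul (w k)) hsum_norm]
  simp only [integral_const_mul]

lemma gaussian_scale_mixture_integrand_eq_tsum {s c a : ℝ} (hs : 0 < s) (hc : c = 1 / (2 * s))
    (ha : 0 < a) (ν r x : ℝ) :
    exp (-a) * a ^ (ν - 1) * (2 * π * (s + 1 / (2 * a))) ^ (-r) *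
        exp (-x / (2 * (s + 1 / (2 * a)))) =
      ∑' k : ℕ, (2 * π * s) ^ (-r) * exp (-x / (2 * s)) * ((x / (2 * s) * c) ^ k / k !) *
        (exp (-a) * a ^ (ν + r - 1) * (a + c) ^ (-(k : ℝ) - r)) := by
  have hb : 0 < a + c := by rw [hc]; positivity
  have hsplit : s + 1 / (2 * a) = s * (a + c) / a := by rw [hc]; field_simp
  have hpow :
      (2 * π * (s + 1 / (2 * a))) ^ (-r) = (2 * π * s) ^ (-r) * a ^ r * (a + c) ^ (-r) := by
    rw [hsplit, show 2 * π * (s * (a + c) / a) = 2 * π * s * ((a + c) / a) by ring,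
      mul_rpow (by positivity) (by positivity), div_rpow hb.le ha.le, rpow_neg ha.le,
      div_inv_eq_mul]
    ring
  have hexp : exp (-x / (2 * (s + 1 / (2 * a)))) =
      exp (-x / (2 * s)) * exp (x / (2 * s) * c / (a + c)) := by
    rw [← exp_add, hsplit, hc]
    congr 1
    field_simp
    ring
  have hrpow : a ^ (ν + r - 1) = a ^ (ν - 1) * a ^ r := by
    rw [← rpow_add ha]
    ring_nf
  rw [hpow, hexp, hrpow]
  calc _ = (2 * π * s) ^ (-r) * exp (-x / (2 * s)) * (exp (-a) * (a ^ (ν - 1) * a ^ r)) *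
        ((a + c) ^ (-r) * exp (x / (2 * s) * c / (a + c))) := by ring
    _ = _ := by
      rw [rpow_neg_mul_exp_div_eq_tsum hb, ← tsum_mul_left]
      congr 1 with k
      ring

theorem density_decomposition (ν σ : ℝ) (hν : 0 < ν) (hσ : 0 < σ) (γ : ℝ)
    (hγ : γ = 1 / (σ * Real.sqrt 2)) (d : ℕ) (hd : 1 ≤ d)
    (z : EuclideanSpace ℝ (Fin d)) :
    (∫ a in Set.Ioi (0 : ℝ),
        (1 / Real.Gamma ν) * Real.exp (-a) * a ^ (ν - 1) *
          (2 * π * (σ ^ 2 + 1 / (2 * a))) ^ (-(d : ℝ) / 2) *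
          Real.exp (-(‖z‖ ^ 2) / (2 * (σ ^ 2 + 1 / (2 * a))))) =
      ∑' k : ℕ,
        (Real.Gamma ((k : ℝ) + (d : ℝ) / 2) /
            ((Nat.factorial k : ℝ) * Real.Gamma ((d : ℝ) / 2) * Real.Gamma ν) *
          γ ^ (2 * k) *
          ∫ a in Set.Ioi (0 : ℝ),
            Real.exp (-a) * a ^ (ν + (d : ℝ) / 2 - 1) *
              (a + γ ^ 2) ^ (-(k : ℝ) - (d : ℝ) / 2)) *
        (Real.Gamma ((d : ℝ) / 2) /
            (Real.Gamma ((k : ℝ) + (d : ℝ) / 2) * (σ * Real.sqrt (2 * π)) ^ d) *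
          (‖z‖ ^ 2 / (2 * σ ^ 2)) ^ k * Real.exp (-(‖z‖ ^ 2) / (2 * σ ^ 2))) := by
  have hs : 0 < σ ^ 2 := by positivity
  have hc : γ ^ 2 = 1 / (2 * σ ^ 2) := by
    rw [hγ, div_pow, mul_pow, sq_sqrt zero_le_two]
    ring
  have hc0 : 0 < γ ^ 2 := by rw [hc]; positivity
  have hr : 0 < (d : ℝ) / 2 := div_pos (Nat.cast_pos.mpr hd) two_pos
  have hp : 0 < ν + (d : ℝ) / 2 := add_pos hν hr
  have he (k : ℕ) : -(k : ℝ) - d / 2 ≤ 0 := by linarith [k.cast_nonneg (α := ℝ)]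
  set x := ‖z‖ ^ 2
  set C := 1 / Gamma ν * (2 * π * σ ^ 2) ^ (-((d : ℝ) / 2)) * exp (-x / (2 * σ ^ 2))
  set w : ℕ → ℝ := fun k ↦ C * ((x / (2 * σ ^ 2) * γ ^ 2) ^ k / k !)
  set f : ℕ → ℝ → ℝ := fun k a ↦
    exp (-a) * a ^ (ν + (d : ℝ) / 2 - 1) * (a + γ ^ 2) ^ (-(k : ℝ) - d / 2)
  have hf (k : ℕ) : 0 ≤ᵐ[volume.restrict (Ioi 0)] f k := by
    filter_upwards [ae_restrict_mem measurableSet_Ioi] with a (ha : 0 < a)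
    simp only [Pi.zero_apply, f]
    positivity
  calc _ = ∫ a in Ioi 0, ∑' k, w k * f k a := by
        refine setIntegral_congr_fun measurableSet_Ioi fun a (ha : 0 < a) ↦ ?_
        rw [neg_div, mul_assoc (1 / Gamma ν), mul_assoc (1 / Gamma ν), mul_assoc (1 / Gamma ν),
          gaussian_scale_mixture_integrand_eq_tsum hs hc ha, ← tsum_mul_left]
        simp only [w, f, C, mul_assoc]
    _ = ∑' k, w k * ∫ a in Ioi 0, f k a :=
        integral_tsum_mul_of_nonneg (fun k ↦ by positivity) hf
          (fun k ↦ integrableOn_exp_neg_mul_rpow_mul_add_rpow hp hc0 (he k))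
          (fun k ↦ setIntegral_exp_neg_mul_rpow_mul_add_rpow_le hp hc0 (he k))
          (summable_mul_pow_div_factorial_mul_rpow hc0 _ _ _ _)
    _ = _ := tsum_congr fun k ↦ by
        have : Gamma ((k : ℝ) + d / 2) ≠ 0 := (Gamma_pos_of_pos (by positivity)).ne'
        have : Gamma ((d : ℝ) / 2) ≠ 0 := (Gamma_pos_of_pos hr).ne'
        simp only [w, f, C]
        rw [mul_sqrt_pow_eq_rpow hσ.le (by positivity) d, pow_mul, rpow_neg (by positivity),
          mul_pow]
        field_simp
end

section
/- For fixed γ > 0, ν > 1, d ≥ 1 and every k ≥ 1: α_k^{(ν,γ)} ≤ d γ²/(ν−1), where α_k^{(ν,γ)} = (Γ(k+d/2)/(k!Γ(d/2)Γ(ν))) γ^{2k} ∫_0^∞ e^{-a} a^{ν+d/2-1}(a+γ²)^{-k-d/2} da; in particular lim_{ν→∞} α_k^{(ν,γ)} = 0 for each k ≥ 1 and lim_{ν→∞} α_0^{(ν,γ)} = 1. -/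
/-!
Put `x = d / 2` and `t = γ² / (a + γ²)`. The integrand of `α_k` factors as the Gamma(ν) density
in `a` times the negative binomial weight `p_k(t) = C(x + k - 1, k) tᵏ (1 - t)ˣ`, so `α_k` is the
`k`-th weight of a Gamma mixture of negative binomial laws. The weights `p_k(t)` are nonnegative
and sum to `1` (binomial series of `(1 - t)⁻ˣ`), hence `p_k ≤ 1 - p_0` for `k ≥ 1`, and
`1 - p_0 = 1 - (1 + γ²/a)⁻ˣ ≤ x γ²/a` since `(1 + u)⁻ˣ ≥ exp (-x u) ≥ 1 - x u`. Integrating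
against the Gamma(ν) density, whose mean of `1/a` is `1/(ν - 1)`, gives
`α_k ≤ 1 - α_0 ≤ x γ²/(ν - 1)`.
-/

open Real MeasureTheory Filter Set Polynomial
open scoped Nat

theorem Real.Gamma_add_nat_eq_ascPochhammer_mul {x : ℝ} (hx : 0 < x) (n : ℕ) :
    Gamma (x + n) = (ascPochhammer ℝ n).eval x * Gamma x := by
  induction n with
  | zero => simp
  | succ n ih =>
    rw [Nat.cast_succ, ← add_assoc, Gamma_add_one (by positivity), ih, ascPochhammer_succ_eval]
    ring

theorem Ring.choose_add_nat_sub_one_eq {R : Type*} [Field R] [CharZero R] (x : R) (k : ℕ) :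
    Ring.choose (x + k - 1) k = (ascPochhammer R k).eval x / k ! := by
  rw [Ring.choose_eq_smul, descPochhammer_smeval_eq_ascPochhammer, ascPochhammer_smeval_eq_eval,
    smul_eq_mul, inv_mul_eq_div, sub_right_comm, add_sub_cancel_right, sub_add_cancel]

theorem Real.Gamma_nat_add_div_eq_choose {x : ℝ} (hx : 0 < x) (k : ℕ) :
    Gamma (k + x) / (k ! * Gamma x) = Ring.choose (x + k - 1) k := by
  rw [Ring.choose_add_nat_sub_one_eq, add_comm, Gamma_add_nat_eq_ascPochhammer_mul hx]
  have := (Gamma_pos_of_pos hx).ne'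
  field_simp

theorem Real.one_sub_rpow_one_sub_le {x t : ℝ} (hx : 0 ≤ x) (ht : t < 1) :
    1 - (1 - t) ^ x ≤ x * (t / (1 - t)) := by
  have hs : 0 < 1 - t := by linarith
  have hexp : exp (-(t / (1 - t))) ≤ 1 - t := by
    rw [exp_neg, inv_le_comm₀ (exp_pos _) hs]
    calc (1 - t)⁻¹ = t / (1 - t) + 1 := by field_simp; ring
      _ ≤ exp (t / (1 - t)) := add_one_le_exp _
  calc 1 - (1 - t) ^ x ≤ 1 - exp (-(t / (1 - t))) ^ x := by
        gcongr
    _ = 1 - exp (-(x * (t / (1 - t)))) := by rw [← exp_mul]; ring_nf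
    _ ≤ x * (t / (1 - t)) := by linarith [add_one_le_exp (-(x * (t / (1 - t))))]

noncomputable def negBinomialWeight (x t : ℝ) (k : ℕ) : ℝ :=
  Ring.choose (x + k - 1) k * t ^ k * (1 - t) ^ x

section negBinomialWeight

variable {x t : ℝ}

theorem negBinomialWeight_zero : negBinomialWeight x t 0 = (1 - t) ^ x := by
  simp [negBinomialWeight]

theorem negBinomialWeight_nonneg (hx : 0 < x) (ht0 : 0 ≤ t) (ht1 : t ≤ 1) (k : ℕ) :
    0 ≤ negBinomialWeight x t k := by
  have := ascPochhammer_pos k x hx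
  rw [negBinomialWeight, Ring.choose_add_nat_sub_one_eq]
  have : 0 ≤ 1 - t := by linarith
  positivity

theorem hasSum_negBinomialWeight (x : ℝ) (ht : |t| < 1) : HasSum (negBinomialWeight x t) 1 := by
  have hs : 0 < 1 - t := by linarith [le_abs_self t]
  have hsum := (one_div_one_sub_rpow_hasFPowerSeriesOnBall_zero x).hasSum (y := t)
    (by simpa [edist_dist, Real.dist_eq] using ht)
  simp only [FormalMultilinearSeries.ofScalars_apply_eq, smul_eq_mul, zero_add] at hsum
  have h1 : 1 / (1 - t) ^ x * (1 - t) ^ x = 1 := by field_simp [(rpow_pos_of_pos hs x).ne']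
  exact h1 ▸ hsum.mul_right ((1 - t) ^ x)

theorem negBinomialWeight_le_one (hx : 0 < x) (ht0 : 0 ≤ t) (ht1 : t < 1) (k : ℕ) :
    negBinomialWeight x t k ≤ 1 := by
  simpa using sum_le_hasSum {k} (fun i _ => negBinomialWeight_nonneg hx ht0 ht1.le i)
    (hasSum_negBinomialWeight x (abs_lt.2 ⟨by linarith, ht1⟩))

theorem negBinomialWeight_le_one_sub (hx : 0 < x) (ht0 : 0 ≤ t) (ht1 : t < 1) {k : ℕ}
    (hk : k ≠ 0) : negBinomialWeight x t k ≤ 1 - (1 - t) ^ x := by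
  have hsum := hasSum_negBinomialWeight x (abs_lt.2 ⟨by linarith, ht1⟩)
  have := sum_le_hasSum {0, k} (fun i _ => negBinomialWeight_nonneg hx ht0 ht1.le i) hsum
  rw [Finset.sum_pair hk.symm, negBinomialWeight_zero] at this
  linarith

end negBinomialWeight

noncomputable def gammaDensity (ν a : ℝ) : ℝ := exp (-a) * a ^ (ν - 1) / Gamma ν

section gammaDensity

variable {ν : ℝ}

theorem gammaDensity_nonneg (hν : 0 < ν) {a : ℝ} (ha : 0 ≤ a) : 0 ≤ gammaDensity ν a := by
  have := Gamma_pos_of_pos hν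
  unfold gammaDensity
  positivity

theorem integrableOn_gammaDensity (hν : 0 < ν) : IntegrableOn (gammaDensity ν) (Ioi 0) :=
  (GammaIntegral_convergent hν).div_const _

theorem setIntegral_gammaDensity (hν : 0 < ν) : ∫ a in Ioi 0, gammaDensity ν a = 1 := by
  unfold gammaDensity
  rw [integral_div, ← Gamma_eq_integral hν, div_self (Gamma_pos_of_pos hν).ne']

theorem gammaDensity_mul_inv (hν : 1 < ν) {a : ℝ} (ha : 0 < a) :
    gammaDensity ν a * a⁻¹ = gammaDensity (ν - 1) a / (ν - 1) := by
  have hν1 : 0 < ν - 1 := by linarith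
  have hΓ : Gamma ν = (ν - 1) * Gamma (ν - 1) := by
    rw [← Gamma_add_one hν1.ne', sub_add_cancel]
  rw [gammaDensity, gammaDensity, hΓ, sub_sub, one_add_one_eq_two,
    show ν - 1 = (ν - 2) + 1 by ring, rpow_add_one ha.ne']
  have := (Gamma_pos_of_pos hν1).ne'
  field_simp

theorem setIntegral_gammaDensity_mul_inv (hν : 1 < ν) :
    ∫ a in Ioi 0, gammaDensity ν a * a⁻¹ = (ν - 1)⁻¹ := by
  rw [setIntegral_congr_fun measurableSet_Ioi (fun a ha => gammaDensity_mul_inv hν ha),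
    integral_div, setIntegral_gammaDensity (by linarith), one_div]

theorem integrableOn_gammaDensity_mul_inv (hν : 1 < ν) :
    IntegrableOn (fun a => gammaDensity ν a * a⁻¹) (Ioi 0) :=
  IntegrableOn.congr_fun ((integrableOn_gammaDensity (by linarith : 0 < ν - 1)).div_const _)
    (fun a ha => (gammaDensity_mul_inv hν ha).symm) measurableSet_Ioi

theorem integrableOn_gammaDensity_mul (hν : 0 < ν) {f : ℝ → ℝ} {C : ℝ} (hf : Measurable f)
    (hfC : ∀ a ∈ Ioi 0, ‖f a‖ ≤ C) :
    IntegrableOn (fun a => gammaDensity ν a * f a) (Ioi 0) :=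
  (integrableOn_gammaDensity hν).mul_bdd hf.aestronglyMeasurable.restrict
    (ae_restrict_of_forall_mem measurableSet_Ioi hfC)

end gammaDensity

theorem sq_div_add_sq_mem_Ico {a : ℝ} (ha : 0 < a) (γ : ℝ) : γ ^ 2 / (a + γ ^ 2) ∈ Ico 0 1 :=
  ⟨by positivity, (div_lt_one (by positivity)).2 (by linarith)⟩

theorem one_sub_negBinomialWeight_zero_le {x : ℝ} (hx : 0 ≤ x) (γ : ℝ) {a : ℝ} (ha : 0 < a) :
    1 - negBinomialWeight x (γ ^ 2 / (a + γ ^ 2)) 0 ≤ x * (γ ^ 2 / a) := by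
  have hodds : γ ^ 2 / (a + γ ^ 2) / (1 - γ ^ 2 / (a + γ ^ 2)) = γ ^ 2 / a := by
    have : 0 < a + γ ^ 2 := by positivity
    field_simp [ha.ne']
    ring
  rw [negBinomialWeight_zero, ← hodds]
  exact one_sub_rpow_one_sub_le hx (sq_div_add_sq_mem_Ico ha γ).2

theorem tendsto_const_div_sub_one_atTop (c : ℝ) :
    Tendsto (fun ν : ℝ => c / (ν - 1)) atTop (nhds 0) :=
  tendsto_const_nhds.div_atTop (by
    simpa [sub_eq_add_neg] using tendsto_atTop_add_const_right atTop (-1 : ℝ) tendsto_id)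

noncomputable def gammaMixedNegBinomial (ν x γ : ℝ) (k : ℕ) : ℝ :=
  ∫ a in Ioi 0, gammaDensity ν a * negBinomialWeight x (γ ^ 2 / (a + γ ^ 2)) k

section gammaMixedNegBinomial

variable {ν x : ℝ} (γ : ℝ)

theorem integrableOn_gammaDensity_mul_negBinomialWeight (hν : 0 < ν) (hx : 0 < x) (k : ℕ) :
    IntegrableOn (fun a => gammaDensity ν a * negBinomialWeight x (γ ^ 2 / (a + γ ^ 2)) k)
      (Ioi 0) := by
  refine integrableOn_gammaDensity_mul (C := 1) hν (by unfold negBinomialWeight; fun_prop)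
    fun a ha => ?_
  obtain ⟨ht0, ht1⟩ := sq_div_add_sq_mem_Ico ha γ
  rw [Real.norm_of_nonneg (negBinomialWeight_nonneg hx ht0 ht1.le k)]
  exact negBinomialWeight_le_one hx ht0 ht1 k

theorem gammaMixedNegBinomial_nonneg (hν : 0 < ν) (hx : 0 < x) (k : ℕ) :
    0 ≤ gammaMixedNegBinomial ν x γ k :=
  setIntegral_nonneg measurableSet_Ioi fun _ ha =>
    mul_nonneg (gammaDensity_nonneg hν ha.le) (negBinomialWeight_nonneg hx
      (sq_div_add_sq_mem_Ico ha γ).1 (sq_div_add_sq_mem_Ico ha γ).2.le k)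

theorem one_sub_gammaMixedNegBinomial_zero (hν : 0 < ν) (hx : 0 < x) :
    1 - gammaMixedNegBinomial ν x γ 0 = ∫ a in Ioi 0,
      (gammaDensity ν a - gammaDensity ν a * negBinomialWeight x (γ ^ 2 / (a + γ ^ 2)) 0) := by
  rw [integral_sub (integrableOn_gammaDensity hν)
    (integrableOn_gammaDensity_mul_negBinomialWeight γ hν hx 0), setIntegral_gammaDensity hν,
    gammaMixedNegBinomial]

theorem gammaMixedNegBinomial_le_one_sub_zero (hν : 0 < ν) (hx : 0 < x) {k : ℕ} (hk : k ≠ 0) :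
    gammaMixedNegBinomial ν x γ k ≤ 1 - gammaMixedNegBinomial ν x γ 0 := by
  rw [one_sub_gammaMixedNegBinomial_zero γ hν hx]
  refine setIntegral_mono_on (integrableOn_gammaDensity_mul_negBinomialWeight γ hν hx k)
    ((integrableOn_gammaDensity hν).sub
      (integrableOn_gammaDensity_mul_negBinomialWeight γ hν hx 0)) measurableSet_Ioi
    fun a ha => ?_
  obtain ⟨ht0, ht1⟩ := sq_div_add_sq_mem_Ico ha γ
  rw [← mul_one_sub, negBinomialWeight_zero]
  exact mul_le_mul_of_nonneg_left (negBinomialWeight_le_one_sub hx ht0 ht1 hk)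
    (gammaDensity_nonneg hν ha.le)

theorem one_sub_gammaMixedNegBinomial_zero_le (hν : 1 < ν) (hx : 0 < x) :
    1 - gammaMixedNegBinomial ν x γ 0 ≤ x * γ ^ 2 / (ν - 1) := by
  have hν0 : 0 < ν := by linarith
  rw [one_sub_gammaMixedNegBinomial_zero γ hν0 hx, div_eq_mul_inv,
    ← setIntegral_gammaDensity_mul_inv hν, ← integral_const_mul]
  refine setIntegral_mono_on ((integrableOn_gammaDensity hν0).sub
      (integrableOn_gammaDensity_mul_negBinomialWeight γ hν0 hx 0))
    ((integrableOn_gammaDensity_mul_inv hν).const_mul _) measurableSet_Ioi fun a ha => ?_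
  calc gammaDensity ν a - gammaDensity ν a * negBinomialWeight x (γ ^ 2 / (a + γ ^ 2)) 0
      = gammaDensity ν a * (1 - negBinomialWeight x (γ ^ 2 / (a + γ ^ 2)) 0) := by ring
    _ ≤ gammaDensity ν a * (x * (γ ^ 2 / a)) :=
      mul_le_mul_of_nonneg_left (one_sub_negBinomialWeight_zero_le hx.le γ ha)
        (gammaDensity_nonneg hν0 ha.le)
    _ = x * γ ^ 2 * (gammaDensity ν a * a⁻¹) := by ring

theorem gammaMixedNegBinomial_le (hν : 1 < ν) (hx : 0 < x) {k : ℕ} (hk : k ≠ 0) :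
    gammaMixedNegBinomial ν x γ k ≤ x * γ ^ 2 / (ν - 1) :=
  (gammaMixedNegBinomial_le_one_sub_zero γ (by linarith) hx hk).trans
    (one_sub_gammaMixedNegBinomial_zero_le γ hν hx)

theorem gammaMixedNegBinomial_zero_le_one (hν : 0 < ν) (hx : 0 < x) :
    gammaMixedNegBinomial ν x γ 0 ≤ 1 := by
  linarith [gammaMixedNegBinomial_le_one_sub_zero γ hν hx one_ne_zero,
    gammaMixedNegBinomial_nonneg γ hν hx 1]

theorem tendsto_gammaMixedNegBinomial_atTop (hx : 0 < x) {k : ℕ} (hk : k ≠ 0) :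
    Tendsto (fun ν => gammaMixedNegBinomial ν x γ k) atTop (nhds 0) := by
  refine tendsto_of_tendsto_of_tendsto_of_le_of_le' tendsto_const_nhds
    (tendsto_const_div_sub_one_atTop (x * γ ^ 2)) ?_ ?_ <;>
    filter_upwards [eventually_gt_atTop 1] with ν hν
  exacts [gammaMixedNegBinomial_nonneg γ (by linarith) hx k, gammaMixedNegBinomial_le γ hν hx hk]

theorem tendsto_gammaMixedNegBinomial_zero_atTop (hx : 0 < x) :
    Tendsto (fun ν => gammaMixedNegBinomial ν x γ 0) atTop (nhds 1) := by
  have hlow : Tendsto (fun ν : ℝ => 1 - x * γ ^ 2 / (ν - 1)) atTop (nhds 1) := by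
    simpa using (tendsto_const_div_sub_one_atTop (x * γ ^ 2)).const_sub 1
  refine tendsto_of_tendsto_of_tendsto_of_le_of_le' hlow tendsto_const_nhds ?_ ?_ <;>
    filter_upwards [eventually_gt_atTop 1] with ν hν
  exacts [by linarith [one_sub_gammaMixedNegBinomial_zero_le γ hν hx],
    gammaMixedNegBinomial_zero_le_one γ (by linarith) hx]

end gammaMixedNegBinomial

theorem gammaDensity_mul_negBinomialWeight_eq {x : ℝ} (hx : 0 < x) (ν γ : ℝ) (k : ℕ) {a : ℝ}
    (ha : 0 < a) :
    Gamma (k + x) / (k ! * Gamma x * Gamma ν) * γ ^ (2 * k) *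
        (exp (-a) * a ^ (ν + x - 1) * (a + γ ^ 2) ^ (-(k : ℝ) - x)) =
      gammaDensity ν a * negBinomialWeight x (γ ^ 2 / (a + γ ^ 2)) k := by
  have hb : 0 < a + γ ^ 2 := by positivity
  have hΓ := (Gamma_pos_of_pos hx).ne'
  rw [negBinomialWeight, ← Gamma_nat_add_div_eq_choose hx, gammaDensity, one_sub_div hb.ne',
    add_sub_cancel_right, div_rpow ha.le hb.le, show ν + x - 1 = ν - 1 + x by ring,
    rpow_add ha, rpow_sub hb, rpow_neg hb.le, rpow_natCast, div_pow, pow_mul]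
  field_simp

theorem integral_gammaIntegrand_eq_gammaMixedNegBinomial {x : ℝ} (hx : 0 < x) (ν γ : ℝ) (k : ℕ) :
    Gamma (k + x) / (k ! * Gamma x * Gamma ν) * γ ^ (2 * k) *
        ∫ a in Ioi 0, exp (-a) * a ^ (ν + x - 1) * (a + γ ^ 2) ^ (-(k : ℝ) - x) =
      gammaMixedNegBinomial ν x γ k := by
  rw [← integral_const_mul]
  exact setIntegral_congr_fun measurableSet_Ioi fun a ha =>
    gammaDensity_mul_negBinomialWeight_eq hx ν γ k ha

theorem alpha_k_bound_and_limits_general (γ : ℝ) (d : ℕ) (hd : 1 ≤ d)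
    (α : ℝ → ℕ → ℝ)
    (hα : ∀ (ν : ℝ) (k : ℕ), α ν k =
      Real.Gamma ((k : ℝ) + (d : ℝ) / 2) /
          ((Nat.factorial k : ℝ) * Real.Gamma ((d : ℝ) / 2) * Real.Gamma ν) *
        γ ^ (2 * k) *
        ∫ a in Set.Ioi (0 : ℝ),
          Real.exp (-a) * a ^ (ν + (d : ℝ) / 2 - 1) * (a + γ ^ 2) ^ (-(k : ℝ) - (d : ℝ) / 2)) :
    (∀ ν : ℝ, 1 < ν → ∀ k : ℕ, 1 ≤ k → α ν k ≤ (d : ℝ) * γ ^ 2 / (ν - 1)) ∧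
      (∀ k : ℕ, 1 ≤ k → Tendsto (fun ν : ℝ => α ν k) atTop (nhds 0)) ∧
      Tendsto (fun ν : ℝ => α ν 0) atTop (nhds 1) := by
  have hx : (0 : ℝ) < d / 2 := by positivity
  obtain rfl : α = fun ν k => gammaMixedNegBinomial ν (d / 2) γ k := funext₂ fun ν k => by
    rw [hα, integral_gammaIntegrand_eq_gammaMixedNegBinomial hx]
  refine ⟨fun ν hν k hk => (gammaMixedNegBinomial_le γ hν hx (by omega)).trans ?_,
    fun k hk => tendsto_gammaMixedNegBinomial_atTop γ hx (by omega),
    tendsto_gammaMixedNegBinomial_zero_atTop γ hx⟩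
  have : 0 < ν - 1 := by linarith
  gcongr
  exact half_le_self d.cast_nonneg

theorem alpha_k_bound_and_limits (γ : ℝ) (hγ : 0 < γ) (d : ℕ) (hd : 1 ≤ d)
    (α : ℝ → ℕ → ℝ)
    (hα : ∀ (ν : ℝ) (k : ℕ), α ν k =
      Real.Gamma ((k : ℝ) + (d : ℝ) / 2) /
          ((Nat.factorial k : ℝ) * Real.Gamma ((d : ℝ) / 2) * Real.Gamma ν) *
        γ ^ (2 * k) *
        ∫ a in Set.Ioi (0 : ℝ),
          Real.exp (-a) * a ^ (ν + (d : ℝ) / 2 - 1) * (a + γ ^ 2) ^ (-(k : ℝ) - (d : ℝ) / 2)) :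
    (∀ ν : ℝ, 1 < ν → ∀ k : ℕ, 1 ≤ k → α ν k ≤ (d : ℝ) * γ ^ 2 / (ν - 1)) ∧
      (∀ k : ℕ, 1 ≤ k → Tendsto (fun ν : ℝ => α ν k) atTop (nhds 0)) ∧
      Tendsto (fun ν : ℝ => α ν 0) atTop (nhds 1) :=
  alpha_k_bound_and_limits_general γ d hd α hα
end

section
/- For ν > 0, σ > 0, d ≥ 1, and k ∈ ℕ, the quantity τ_k = ((σ√2)^d/Γ(ν)) ∫_0^∞ s^{ν+d/2-1} e^{-s} (1 + 2σ²s)^{-k-d/2} ds is a Hausdorff moment sequence: τ_k = ∫_0^1 u^k dμ(u), where dμ(u) = (1/((2σ²)^ν Γ(ν))) u^{-ν-1}(1-u)^{ν+d/2-1} exp(−(1−u)/(2σ²u)) du (a positive finite measure on (0,1)). -/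
/-! Substitute `u = (1 + 2σ²s)⁻¹`. Then `1 - u = 2σ²s u`, so `exp (-s) = exp (-(1 - u) / (2σ²u))`,
the factor `(1 + 2σ²s)^(-k)` becomes `u ^ k`, and the Jacobian `2σ²u²` together with
`s = (1 - u) / (2σ²u)` turns the remaining powers of `s` and `1 + 2σ²s` into those of the density. -/

open Real MeasureTheory Set

/-- The density of the paper's measure `μ`, with `a = 2σ²` and `c = d / 2`. -/
noncomputable def hausdorffDensity (a ν c u : ℝ) : ℝ :=
  1 / (a ^ ν * Gamma ν) * ((1 - u) ^ (ν + c - 1) / u ^ (ν + 1)) * exp (-(1 - u) / (a * u))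

theorem image_inv_one_add_mul_Ioi {a : ℝ} (ha : 0 < a) :
    (fun s : ℝ => (1 + a * s)⁻¹) '' Ioi 0 = Ioo 0 1 := by
  ext u
  constructor
  · rintro ⟨s, hs, rfl⟩
    have hs : 1 < 1 + a * s := by have := mul_pos ha (mem_Ioi.mp hs); linarith
    exact ⟨by positivity, inv_lt_one_of_one_lt₀ hs⟩
  · rintro ⟨hu0, hu1⟩
    refine ⟨(1 - u) / (a * u), div_pos (sub_pos.mpr hu1) (mul_pos ha hu0), ?_⟩
    field_simp
    ring

theorem integral_Ioo_zero_one_eq_integral_Ioi {a : ℝ} (ha : 0 < a) (g : ℝ → ℝ) :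
    ∫ u in Ioo 0 1, g u = ∫ s in Ioi 0, a / (1 + a * s) ^ 2 * g (1 + a * s)⁻¹ := by
  have hpos : ∀ s ∈ Ioi (0 : ℝ), 0 < 1 + a * s := fun s hs => by
    have := mul_pos ha (mem_Ioi.mp hs); linarith
  have hderiv : ∀ s ∈ Ioi (0 : ℝ),
      HasDerivWithinAt (fun s => (1 + a * s)⁻¹) (-a / (1 + a * s) ^ 2) (Ioi 0) s := by
    intro s hs
    have h := (((hasDerivAt_id s).const_mul a).const_add 1).inv (hpos s hs).ne'
    simpa [neg_div, Pi.inv_def] using h.hasDerivWithinAt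
  have hanti : StrictAntiOn (fun s : ℝ => (1 + a * s)⁻¹) (Ioi 0) := fun s hs t _ hst =>
    inv_strictAnti₀ (hpos s hs) (by nlinarith)
  rw [← image_inv_one_add_mul_Ioi ha,
    integral_image_eq_integral_abs_deriv_smul measurableSet_Ioi hderiv hanti.injOn]
  refine setIntegral_congr_fun measurableSet_Ioi fun s hs => ?_
  rw [smul_eq_mul, abs_div, abs_neg, abs_of_pos ha, abs_of_pos (pow_pos (hpos s hs) 2)]

theorem one_sub_inv_one_add_mul {a s : ℝ} (h : 1 + a * s ≠ 0) :
    1 - (1 + a * s)⁻¹ = a * s / (1 + a * s) := by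
  field_simp
  ring

theorem mul_pow_mul_hausdorffDensity_inv_one_add_mul {a s : ℝ} (ha : 0 < a) (hs : 0 < s)
    (ν c : ℝ) (k : ℕ) :
    a / (1 + a * s) ^ 2 * ((1 + a * s)⁻¹ ^ k * hausdorffDensity a ν c (1 + a * s)⁻¹) =
      a ^ c / Gamma ν * (s ^ (ν + c - 1) * exp (-s) * (1 + a * s) ^ (-(k : ℝ) - c)) := by
  unfold hausdorffDensity
  set t := 1 + a * s with ht
  have ht0 : 0 < t := by positivity
  have hexp : -(1 - t⁻¹) / (a * t⁻¹) = -s := by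
    rw [one_sub_inv_one_add_mul ht0.ne']
    field_simp
    rw [ht]
  have hpow : (1 - t⁻¹) ^ (ν + c - 1) = a ^ (ν + c - 1) * s ^ (ν + c - 1) / t ^ (ν + c - 1) := by
    rw [one_sub_inv_one_add_mul ht0.ne', div_rpow (by positivity) ht0.le, mul_rpow ha.le hs.le]
  have hsplit : t ^ (-(k : ℝ) - c) =
      (t ^ k)⁻¹ * (t ^ 2)⁻¹ * (t ^ (ν + c - 1))⁻¹ * t ^ (ν + 1) := by
    rw [← rpow_natCast t k, ← rpow_natCast t 2, ← rpow_neg ht0.le, ← rpow_neg ht0.le,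
      ← rpow_neg ht0.le, ← rpow_add ht0, ← rpow_add ht0, ← rpow_add ht0]
    congr 1
    push_cast
    ring
  have hconst : a ^ c = a * a ^ (ν + c - 1) / a ^ ν := by
    rw [rpow_sub ha, rpow_add ha, rpow_one]
    field_simp
  rw [hexp, hpow, inv_rpow ht0.le, inv_pow, hsplit, hconst]
  have := rpow_pos_of_pos ht0 (ν + c - 1)
  have := rpow_pos_of_pos ht0 (ν + 1)
  have := rpow_pos_of_pos ha ν
  field_simp

theorem mul_sqrt_two_pow_eq_rpow {σ : ℝ} (hσ : 0 ≤ σ) (d : ℕ) :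
    (σ * √2) ^ d = (2 * σ ^ 2) ^ ((d : ℝ) / 2) := by
  rw [show (d : ℝ) / 2 = 1 / 2 * d by ring, rpow_mul (by positivity), ← sqrt_eq_rpow,
    sqrt_mul zero_le_two, sqrt_sq hσ, rpow_natCast, mul_comm]

theorem tau_hausdorff_moment_general (ν σ : ℝ) (hσ : 0 < σ) (d : ℕ) (k : ℕ) :
    ((σ * Real.sqrt 2) ^ d / Real.Gamma ν) *
        ∫ s in Set.Ioi (0 : ℝ),
          s ^ (ν + (d : ℝ) / 2 - 1) * Real.exp (-s) *
            (1 + 2 * σ ^ 2 * s) ^ (-(k : ℝ) - (d : ℝ) / 2) =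
      ∫ u in (0 : ℝ)..1,
        u ^ k *
          (1 / ((2 * σ ^ 2) ^ ν * Real.Gamma ν) *
            ((1 - u) ^ (ν + (d : ℝ) / 2 - 1) / u ^ (ν + 1)) *
            Real.exp (-(1 - u) / (2 * σ ^ 2 * u))) := by
  have ha : 0 < 2 * σ ^ 2 := by positivity
  change _ = ∫ u in (0 : ℝ)..1, u ^ k * hausdorffDensity (2 * σ ^ 2) ν ((d : ℝ) / 2) u
  rw [intervalIntegral.integral_of_le zero_le_one, integral_Ioc_eq_integral_Ioo,
    integral_Ioo_zero_one_eq_integral_Ioi ha, mul_sqrt_two_pow_eq_rpow hσ.le,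
    ← integral_const_mul]
  exact setIntegral_congr_fun measurableSet_Ioi fun s hs =>
    (mul_pow_mul_hausdorffDensity_inv_one_add_mul ha hs ν _ k).symm

theorem tau_hausdorff_moment (ν σ : ℝ) (hν : 0 < ν) (hσ : 0 < σ) (d : ℕ) (hd : 1 ≤ d) (k : ℕ) :
    ((σ * Real.sqrt 2) ^ d / Real.Gamma ν) *
        ∫ s in Set.Ioi (0 : ℝ),
          s ^ (ν + (d : ℝ) / 2 - 1) * Real.exp (-s) *
            (1 + 2 * σ ^ 2 * s) ^ (-(k : ℝ) - (d : ℝ) / 2) =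
      ∫ u in (0 : ℝ)..1,
        u ^ k *
          (1 / ((2 * σ ^ 2) ^ ν * Real.Gamma ν) *
            ((1 - u) ^ (ν + (d : ℝ) / 2 - 1) / u ^ (ν + 1)) *
            Real.exp (-(1 - u) / (2 * σ ^ 2 * u))) :=
  tau_hausdorff_moment_general ν σ hσ d k
end

section
/- Let μ, ν > 0, d ≥ 1, n ∈ ℕ. Then ∫_0^1 t^{μ+d/2-1}(1-t)^{ν+d/2-1}(1-t+t²)^n dt = ∫_{3/4}^1 u^n [ (1/2 − √(u−3/4))^{μ+d/2−1}(1/2 + √(u−3/4))^{ν+d/2−1} + (1/2 + √(u−3/4))^{μ+d/2−1}(1/2 − √(u−3/4))^{ν+d/2−1} ] du/(2√(u−3/4)); in particular, the sequence n ↦ ∫_0^1 t^{μ+d/2-1}(1-t)^{ν+d/2-1}(1-t+t²)^n dt is a Hausdorff moment sequence supported on [3/4, 1]. -/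
/-!
Split `[0, 1]` at `1/2` and reflect the left half by `t ↦ 1 - t`, so that the integral becomes
`∫_{1/2}^1 (f t + f (1 - t)) dt`. On `[1/2, 1]` the map `t ↦ 1 - t + t²` is increasing onto
`[3/4, 1]` with inverse `u ↦ 1/2 + √(u - 3/4)`; substituting turns the integral into
`∫_{3/4}^1 u ^ n w(u) du` with a density `w` that is visibly nonnegative, since
`0 ≤ 1/2 ± √(u - 3/4)` on `[3/4, 1]`.
-/

open Real MeasureTheory Set

theorem intervalIntegral.integral_eq_integral_add_comp_reflect {E : Type*} [NormedAddCommGroup E]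
    [NormedSpace ℝ E] {f : ℝ → E} {a b : ℝ} (hf : IntervalIntegrable f volume a b) :
    ∫ x in a..b, f x = ∫ x in (a + b) / 2..b, (f x + f (a + b - x)) := by
  have hm : (a + b) / 2 ∈ uIcc a b := by
    rw [mem_uIcc]
    rcases le_total a b with hab | hab
    · left; constructor <;> linarith
    · right; constructor <;> linarith
  set m := (a + b) / 2
  have hleft : IntervalIntegrable f volume a m := hf.mono_set (uIcc_subset_uIcc_left hm)
  have hright : IntervalIntegrable f volume m b := hf.mono_set (uIcc_subset_uIcc_right hm)
  have hreflect_int : IntervalIntegrable (fun x => f (a + b - x)) volume m b := by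
    simpa [m, show a + b - m = m by ring] using (hleft.comp_sub_left (a + b)).symm
  have hreflect : ∫ x in m..b, f (a + b - x) = ∫ x in a..m, f x := by
    rw [intervalIntegral.integral_comp_sub_left, show a + b - m = m by ring, add_sub_cancel_right]
  rw [intervalIntegral.integral_add hright hreflect_int, hreflect, add_comm,
    intervalIntegral.integral_add_adjacent_intervals hleft hright]

theorem intervalIntegral.integral_eq_integral_comp_add_sqrt_sub {E : Type*} [NormedAddCommGroup E]
    [NormedSpace ℝ E] (F : ℝ → E) {c m r : ℝ} (hr : 0 ≤ r) :
    ∫ t in c..c + r, F t = ∫ u in m..m + r ^ 2, (2 * √(u - m))⁻¹ • F (c + √(u - m)) := by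
  have hderiv : ∀ u ∈ Ioo m (m + r ^ 2),
      HasDerivAt (fun u => c + √(u - m)) (2 * √(u - m))⁻¹ u := by
    intro u hu
    have hpos : u - m ≠ 0 := (sub_pos.2 hu.1).ne'
    simpa using (((hasDerivAt_id u).sub_const m).sqrt hpos).const_add c
  have key := integral_Icc_deriv_smul_of_deriv_nonneg (g := F) (by fun_prop) hderiv
    (fun u _ => by positivity) (le_add_of_nonneg_right (sq_nonneg r))
  simp only [sub_self, sqrt_zero, add_zero, add_sub_cancel_left, sqrt_sq hr] at key
  rw [intervalIntegral.integral_of_le (le_add_of_nonneg_right hr),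
    intervalIntegral.integral_of_le (le_add_of_nonneg_right (sq_nonneg r)),
    ← integral_Icc_eq_integral_Ioc, ← integral_Icc_eq_integral_Ioc, key]

theorem intervalIntegrable_rpow_mul_one_sub_rpow_zero_half {a : ℝ} (ha : -1 < a) (b : ℝ) :
    IntervalIntegrable (fun t : ℝ => t ^ a * (1 - t) ^ b) volume 0 (1 / 2) := by
  refine (intervalIntegral.intervalIntegrable_rpow' ha).mul_continuousOn
    (ContinuousOn.rpow_const (by fun_prop) fun t ht => Or.inl ?_)
  rw [uIcc_of_le (by norm_num)] at ht
  linarith [ht.2]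

theorem intervalIntegrable_rpow_mul_one_sub_rpow_s19 {a b : ℝ} (ha : -1 < a) (hb : -1 < b) :
    IntervalIntegrable (fun t : ℝ => t ^ a * (1 - t) ^ b) volume 0 1 := by
  have hright : IntervalIntegrable (fun t : ℝ => t ^ a * (1 - t) ^ b) volume (1 / 2) 1 := by
    have := ((intervalIntegrable_rpow_mul_one_sub_rpow_zero_half hb a).comp_sub_left 1).symm
    norm_num [mul_comm] at this
    exact this
  exact (intervalIntegrable_rpow_mul_one_sub_rpow_zero_half ha b).trans hright

theorem cn_integral_as_moment_general (ν μ : ℝ) (hν : 0 < ν) (hμ : 0 < μ) (d : ℕ) (n : ℕ) :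
    (∫ t in (0 : ℝ)..1,
        t ^ (μ + (d : ℝ) / 2 - 1) * (1 - t) ^ (ν + (d : ℝ) / 2 - 1) * (1 - t + t ^ 2) ^ n) =
      (∫ u in (3 / 4 : ℝ)..1,
        u ^ n *
          (((1 / 2 - Real.sqrt (u - 3 / 4)) ^ (μ + (d : ℝ) / 2 - 1) *
              (1 / 2 + Real.sqrt (u - 3 / 4)) ^ (ν + (d : ℝ) / 2 - 1) +
            (1 / 2 + Real.sqrt (u - 3 / 4)) ^ (μ + (d : ℝ) / 2 - 1) *
              (1 / 2 - Real.sqrt (u - 3 / 4)) ^ (ν + (d : ℝ) / 2 - 1)) /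
            (2 * Real.sqrt (u - 3 / 4)))) ∧
      ∀ u ∈ Set.Ioo (3 / 4 : ℝ) 1,
        0 ≤ ((1 / 2 - Real.sqrt (u - 3 / 4)) ^ (μ + (d : ℝ) / 2 - 1) *
              (1 / 2 + Real.sqrt (u - 3 / 4)) ^ (ν + (d : ℝ) / 2 - 1) +
            (1 / 2 + Real.sqrt (u - 3 / 4)) ^ (μ + (d : ℝ) / 2 - 1) *
              (1 / 2 - Real.sqrt (u - 3 / 4)) ^ (ν + (d : ℝ) / 2 - 1)) /
            (2 * Real.sqrt (u - 3 / 4)) := by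
  have hd : (0 : ℝ) ≤ d / 2 := by positivity
  have ha : -1 < μ + (d : ℝ) / 2 - 1 := by linarith
  have hb : -1 < ν + (d : ℝ) / 2 - 1 := by linarith
  set a := μ + (d : ℝ) / 2 - 1
  set b := ν + (d : ℝ) / 2 - 1
  refine ⟨?_, fun u hu => ?_⟩
  · have hf := (intervalIntegrable_rpow_mul_one_sub_rpow_s19 ha hb).mul_continuousOn
      (g := fun t => (1 - t + t ^ 2) ^ n) (by fun_prop)
    have hsubst := intervalIntegral.integral_eq_integral_comp_add_sqrt_sub
      (fun t : ℝ => t ^ a * (1 - t) ^ b * (1 - t + t ^ 2) ^ n + (1 - t) ^ a * (1 - (1 - t)) ^ b *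
        (1 - (1 - t) + (1 - t) ^ 2) ^ n) (c := 1 / 2) (m := 3 / 4) (r := 1 / 2) (by norm_num)
    rw [show (1 / 2 : ℝ) + 1 / 2 = 1 by norm_num, show (3 / 4 : ℝ) + (1 / 2) ^ 2 = 1 by norm_num]
      at hsubst
    rw [intervalIntegral.integral_eq_integral_add_comp_reflect hf, zero_add, hsubst]
    refine intervalIntegral.integral_congr fun u hu => ?_
    rw [uIcc_of_le (by norm_num)] at hu
    set s := √(u - 3 / 4)
    have hs : s ^ 2 = u - 3 / 4 := sq_sqrt (by linarith [hu.1])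
    have e₁ : 1 - (1 / 2 + s) + (1 / 2 + s) ^ 2 = u := by linear_combination hs
    have e₂ : 1 - (1 / 2 - s) + (1 / 2 - s) ^ 2 = u := by linear_combination hs
    rw [e₁, show 1 - (1 / 2 + s) = 1 / 2 - s by ring, e₂, show 1 - (1 / 2 - s) = 1 / 2 + s by ring,
      smul_eq_mul]
    ring
  · have hs : √(u - 3 / 4) ≤ 1 / 2 := (sqrt_le_left (by norm_num)).2 (by linarith [hu.2])
    have hminus : 0 ≤ 1 / 2 - √(u - 3 / 4) := by linarith
    have hplus : 0 ≤ 1 / 2 + √(u - 3 / 4) := by positivity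
    exact div_nonneg (add_nonneg (mul_nonneg (rpow_nonneg hminus _) (rpow_nonneg hplus _))
      (mul_nonneg (rpow_nonneg hplus _) (rpow_nonneg hminus _))) (by positivity)

theorem cn_integral_as_moment (ν μ : ℝ) (hν : 0 < ν) (hμ : 0 < μ) (d : ℕ) (hd : 1 ≤ d) (n : ℕ) :
    (∫ t in (0 : ℝ)..1,
        t ^ (μ + (d : ℝ) / 2 - 1) * (1 - t) ^ (ν + (d : ℝ) / 2 - 1) * (1 - t + t ^ 2) ^ n) =
      (∫ u in (3 / 4 : ℝ)..1,
        u ^ n *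
          (((1 / 2 - Real.sqrt (u - 3 / 4)) ^ (μ + (d : ℝ) / 2 - 1) *
              (1 / 2 + Real.sqrt (u - 3 / 4)) ^ (ν + (d : ℝ) / 2 - 1) +
            (1 / 2 + Real.sqrt (u - 3 / 4)) ^ (μ + (d : ℝ) / 2 - 1) *
              (1 / 2 - Real.sqrt (u - 3 / 4)) ^ (ν + (d : ℝ) / 2 - 1)) /
            (2 * Real.sqrt (u - 3 / 4)))) ∧
      ∀ u ∈ Set.Ioo (3 / 4 : ℝ) 1,
        0 ≤ ((1 / 2 - Real.sqrt (u - 3 / 4)) ^ (μ + (d : ℝ) / 2 - 1) *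
              (1 / 2 + Real.sqrt (u - 3 / 4)) ^ (ν + (d : ℝ) / 2 - 1) +
            (1 / 2 + Real.sqrt (u - 3 / 4)) ^ (μ + (d : ℝ) / 2 - 1) *
              (1 / 2 - Real.sqrt (u - 3 / 4)) ^ (ν + (d : ℝ) / 2 - 1)) /
            (2 * Real.sqrt (u - 3 / 4)) :=
  cn_integral_as_moment_general ν μ hν hμ d n
end
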